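/- arXiv:2501.03858 — 4 statements merged into one kernel-verified Lean document; each statement's English description precedes it below -/
import Mathlib

section
/- Let U be any linear subspace of L2(X,Y,μ) that is closed under the averaging operator Q (i.e. QU ⊆ U). Define S = {f ∈ U : f is G-equivariant} and A = {f ∈ U : Qf = 0}. Then U admits the orthogonal direct-sum decomposition U = S ⊕ A: every u ∈ U can be written uniquely as u = s + a with s ∈ S, a ∈ A, and ⟨s, a⟩_μ = 0. -/
/-! The average `Q u` is equivariant by right invariance of `λ`, and `Q (u - Q u) = 0` because
`Q` fixes equivariant functions, so `u = Q u + (u - Q u)`. For equivariant `s`, invariance of `μ`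
and Fubini on `λ × μ` give `∫ ⟪s, a⟫ dμ = ∫ ⟪s, Q a⟫ dμ`, so `s ⊥ a` whenever `Q a = 0`. If
`s + a = s' + a'`, then `s - s'` is equivariant and equal to `a' - a`, hence orthogonal to itself. -/

open MeasureTheory
open scoped ENNReal

/-- The equivariant averaging operator `Q f (x) = ∫_G ψ(g)⁻¹ f (φ(g) x) dλ(g)`. -/
noncomputable def avgQ {G X : Type*} [MeasurableSpace G] {k : ℕ}
    (lam : Measure G) (φ : G → X → X)
    (ψ : G → (EuclideanSpace ℝ (Fin k) ≃ₗᵢ[ℝ] EuclideanSpace ℝ (Fin k)))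
    (f : X → EuclideanSpace ℝ (Fin k)) : X → EuclideanSpace ℝ (Fin k) :=
  fun x => ∫ g, (ψ g).symm (f (φ g x)) ∂lam

/-- `f` is `G`-equivariant: `f (φ g x) = ψ g (f x)` for all `g, x`. -/
def IsEquivariant {G X : Type*} {k : ℕ} (φ : G → X → X)
    (ψ : G → (EuclideanSpace ℝ (Fin k) ≃ₗᵢ[ℝ] EuclideanSpace ℝ (Fin k)))
    (f : X → EuclideanSpace ℝ (Fin k)) : Prop :=
  ∀ g x, f (φ g x) = ψ g (f x)

open scoped InnerProductSpace

theorem measurable_symm_apply_of_measurable {α E : Type*} [MeasurableSpace α]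
    [NormedAddCommGroup E] [InnerProductSpace ℝ E] [FiniteDimensional ℝ E]
    [MeasurableSpace E] [BorelSpace E] {ψ : α → E ≃ₗᵢ[ℝ] E}
    (hψ : Measurable fun p : α × E => ψ p.1 p.2) :
    Measurable fun p : α × E => (ψ p.1).symm p.2 := by
  let b := stdOrthonormalBasis ℝ E
  -- `(ψ g).symm` is the adjoint of `ψ g`, so its coordinates are `⟪ψ g (b i), v⟫`
  have hcoord : (fun p : α × E => (ψ p.1).symm p.2)
      = fun p => ∑ i, ⟪ψ p.1 (b i), p.2⟫_ℝ • b i := by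
    funext p
    simp_rw [LinearIsometryEquiv.inner_map_eq_flip]
    exact (b.sum_repr' _).symm
  rw [hcoord]
  refine Finset.measurable_sum _ fun i _ => ?_
  exact ((hψ.comp (measurable_fst.prodMk measurable_const)).inner measurable_snd).smul_const _

theorem measurePreserving_uncurry_of_map_eq {α X : Type*} [MeasurableSpace α]
    [MeasurableSpace X] {lam : Measure α} [IsProbabilityMeasure lam] {μ : Measure X} [SFinite μ]
    {φ : α → X → X} (hφ : Measurable fun p : α × X => φ p.1 p.2)
    (hμ : ∀ g, Measure.map (φ g) μ = μ) :
    MeasurePreserving (fun p : α × X => φ p.1 p.2) (lam.prod μ) μ := by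
  refine ⟨hφ, Measure.ext fun A hA => ?_⟩
  have hfiber : ∀ g, μ (Prod.mk g ⁻¹' ((fun p : α × X => φ p.1 p.2) ⁻¹' A)) = μ A :=
    fun g => by
      change μ (φ g ⁻¹' A) = μ A
      rw [← Measure.map_apply (f := φ g) (hφ.comp measurable_prodMk_left) hA, hμ g]
  simp [Measure.map_apply hφ hA, Measure.prod_apply (hφ hA), hfiber]

theorem MeasureTheory.MemLp.integrable_inner {X E : Type*} [MeasurableSpace X] {μ : Measure X}
    [NormedAddCommGroup E] [InnerProductSpace ℝ E] {f h : X → E}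
    (hf : MemLp f 2 μ) (hh : MemLp h 2 μ) : Integrable (fun x => ⟪f x, h x⟫_ℝ) μ := by
  refine (L2.integrable_inner (𝕜 := ℝ) (hf.toLp f) (hh.toLp h)).congr ?_
  filter_upwards [hf.coeFn_toLp, hh.coeFn_toLp] with x hfx hhx
  rw [hfx, hhx]

theorem MeasureTheory.MemLp.ae_eq_zero_of_integral_inner_self {X E : Type*} [MeasurableSpace X]
    {μ : Measure X} [NormedAddCommGroup E] [InnerProductSpace ℝ E] {f : X → E}
    (hf : MemLp f 2 μ) (h : ∫ x, ⟪f x, f x⟫_ℝ ∂μ = 0) : f =ᵐ[μ] 0 := by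
  have hzero := (integral_eq_zero_iff_of_nonneg (fun x => real_inner_self_nonneg)
    (hf.integrable_inner hf)).mp h
  filter_upwards [hzero] with x hx
  exact inner_self_eq_zero.mp hx

theorem integral_sub_integral_eq_zero {α E : Type*} [MeasurableSpace α] [NormedAddCommGroup E]
    [NormedSpace ℝ E] [CompleteSpace E] {lam : Measure α} [IsProbabilityMeasure lam] (F : α → E) :
    ∫ g, (F g - ∫ g', F g' ∂lam) ∂lam = 0 := by
  by_cases hF : Integrable F lam
  · rw [integral_sub hF (integrable_const _), integral_const, probReal_univ, one_smul, sub_self]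
  · simp [integral_undef hF]

theorem IsEquivariant.sub {G X : Type*} {k : ℕ} {φ : G → X → X}
    {ψ : G → (EuclideanSpace ℝ (Fin k) ≃ₗᵢ[ℝ] EuclideanSpace ℝ (Fin k))}
    {s s' : X → EuclideanSpace ℝ (Fin k)} (hs : IsEquivariant φ ψ s)
    (hs' : IsEquivariant φ ψ s') : IsEquivariant φ ψ (s - s') := fun g x => by
  simp [hs g x, hs' g x]

section Averaging

variable {G X : Type*} [MeasurableSpace G] {k : ℕ}
  {lam : Measure G} {φ : G → X → X}
  {ψ : G → (EuclideanSpace ℝ (Fin k) ≃ₗᵢ[ℝ] EuclideanSpace ℝ (Fin k))}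

theorem isEquivariant_avgQ [Group G] [MeasurableMul G]
    (hlam_right : ∀ g : G, Measure.map (fun h => h * g) lam = lam)
    (hφ_mul : ∀ g h x, φ (g * h) x = φ g (φ h x))
    (hψ_mul : ∀ g h v, ψ (g * h) v = ψ g (ψ h v)) (u : X → EuclideanSpace ℝ (Fin k)) :
    IsEquivariant φ ψ (avgQ lam φ ψ u) := by
  intro h x
  have hshift : ∀ g,
      (ψ g).symm (u (φ g (φ h x))) = ψ h ((ψ (g * h)).symm (u (φ (g * h) x))) := by
    intro g
    rw [← hφ_mul]
    apply (ψ g).injective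
    rw [LinearIsometryEquiv.apply_symm_apply, ← hψ_mul, LinearIsometryEquiv.apply_symm_apply]
  have hinv :
      ∫ g, (ψ (g * h)).symm (u (φ (g * h) x)) ∂lam = ∫ g, (ψ g).symm (u (φ g x)) ∂lam := by
    conv_rhs => rw [← hlam_right h]
    exact (integral_map_equiv (MeasurableEquiv.mulRight h) fun g => (ψ g).symm (u (φ g x))).symm
  calc ∫ g, (ψ g).symm (u (φ g (φ h x))) ∂lam
      = ψ h (∫ g, (ψ (g * h)).symm (u (φ (g * h) x)) ∂lam) := by
        simp_rw [hshift]
        exact (ψ h).toLinearIsometry.integral_comp_comm _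
    _ = ψ h (avgQ lam φ ψ u x) := by rw [hinv]; rfl

theorem avgQ_sub_avgQ_eq_zero [Group G] [MeasurableMul G] [IsProbabilityMeasure lam]
    (hlam_right : ∀ g : G, Measure.map (fun h => h * g) lam = lam)
    (hφ_mul : ∀ g h x, φ (g * h) x = φ g (φ h x))
    (hψ_mul : ∀ g h v, ψ (g * h) v = ψ g (ψ h v)) (u : X → EuclideanSpace ℝ (Fin k)) (x : X) :
    avgQ lam φ ψ (u - avgQ lam φ ψ u) x = 0 := by
  have hequiv := isEquivariant_avgQ hlam_right hφ_mul hψ_mul u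
  have hpt : ∀ g, (ψ g).symm ((u - avgQ lam φ ψ u) (φ g x))
      = (ψ g).symm (u (φ g x)) - avgQ lam φ ψ u x := by
    intro g
    rw [Pi.sub_apply, map_sub, hequiv g x, LinearIsometryEquiv.symm_apply_apply]
  simp only [avgQ, hpt]
  exact integral_sub_integral_eq_zero _

theorem integral_inner_avgQ_of_isEquivariant [MeasurableSpace X] [IsProbabilityMeasure lam]
    {μ : Measure X} [SFinite μ] (hφ_meas : Measurable fun p : G × X => φ p.1 p.2)
    (hψ_meas : Measurable fun p : G × EuclideanSpace ℝ (Fin k) => ψ p.1 p.2)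
    (hμ_inv : ∀ g : G, Measure.map (φ g) μ = μ) {s a : X → EuclideanSpace ℝ (Fin k)}
    (hs : IsEquivariant φ ψ s) (ha : Integrable a μ)
    (hsa : Integrable (fun x => ⟪s x, a x⟫_ℝ) μ) :
    ∫ x, ⟪s x, avgQ lam φ ψ a x⟫_ℝ ∂μ = ∫ x, ⟪s x, a x⟫_ℝ ∂μ := by
  set Φ : G × X → X := fun p => φ p.1 p.2
  have hΦ : MeasurePreserving Φ (lam.prod μ) μ :=
    measurePreserving_uncurry_of_map_eq hφ_meas hμ_inv
  set F : G × X → EuclideanSpace ℝ (Fin k) := fun p => (ψ p.1).symm (a (Φ p))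
  have hF : Integrable F (lam.prod μ) := by
    refine ((hΦ.integrable_comp ha.aestronglyMeasurable).2 ha).norm.mono' ?_
      (ae_of_all _ fun p => by simp [F])
    refine ((measurable_symm_apply_of_measurable hψ_meas).comp_aemeasurable
      (measurable_fst.aemeasurable.prodMk ?_)).aestronglyMeasurable
    exact ha.aemeasurable.comp_quasiMeasurePreserving hΦ.quasiMeasurePreserving
  -- equivariance of `s` moves `(ψ g)⁻¹` across the inner product
  have hpt : (fun p : G × X => ⟪s p.2, F p⟫_ℝ) = fun p => ⟪s (Φ p), a (Φ p)⟫_ℝ := by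
    funext p
    rw [← LinearIsometryEquiv.inner_map_eq_flip, ← hs]
  have hint : Integrable (fun p : G × X => ⟪s (Φ p), a (Φ p)⟫_ℝ) (lam.prod μ) :=
    (hΦ.integrable_comp hsa.aestronglyMeasurable).2 hsa
  calc ∫ x, ⟪s x, avgQ lam φ ψ a x⟫_ℝ ∂μ
      = ∫ x, ∫ g, ⟪s x, F (g, x)⟫_ℝ ∂lam ∂μ := by
        refine integral_congr_ae ?_
        filter_upwards [hF.prod_left_ae] with x hx
        exact (integral_inner hx _).symm
    _ = ∫ p, ⟪s (Φ p), a (Φ p)⟫_ℝ ∂(lam.prod μ) := by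
        rw [← hpt] at hint ⊢
        exact (integral_prod_symm _ hint).symm
    _ = ∫ x, ⟪s x, a x⟫_ℝ ∂μ := by
        conv_rhs => rw [← hΦ.map_eq]
        exact (integral_map hΦ.aemeasurable (hΦ.map_eq ▸ hsa.aestronglyMeasurable)).symm

theorem integral_inner_eq_zero_of_avgQ_eq_zero [MeasurableSpace X] [IsProbabilityMeasure lam]
    {μ : Measure X} [IsFiniteMeasure μ] (hφ_meas : Measurable fun p : G × X => φ p.1 p.2)
    (hψ_meas : Measurable fun p : G × EuclideanSpace ℝ (Fin k) => ψ p.1 p.2)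
    (hμ_inv : ∀ g : G, Measure.map (φ g) μ = μ) {s a : X → EuclideanSpace ℝ (Fin k)}
    (hs : IsEquivariant φ ψ s) (hs2 : MemLp s 2 μ) (ha2 : MemLp a 2 μ)
    (ha : ∀ x, avgQ lam φ ψ a x = 0) :
    ∫ x, ⟪s x, a x⟫_ℝ ∂μ = 0 := by
  rw [← integral_inner_avgQ_of_isEquivariant (lam := lam) hφ_meas hψ_meas hμ_inv hs
    (ha2.integrable one_le_two) (hs2.integrable_inner ha2)]
  simp [ha]

theorem IsEquivariant.ae_eq_of_add_ae_eq_add [MeasurableSpace X] [IsProbabilityMeasure lam]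
    {μ : Measure X} [IsFiniteMeasure μ] (hφ_meas : Measurable fun p : G × X => φ p.1 p.2)
    (hψ_meas : Measurable fun p : G × EuclideanSpace ℝ (Fin k) => ψ p.1 p.2)
    (hμ_inv : ∀ g : G, Measure.map (φ g) μ = μ) {s s' a a' : X → EuclideanSpace ℝ (Fin k)}
    (hs : IsEquivariant φ ψ s) (hs' : IsEquivariant φ ψ s') (hs2 : MemLp s 2 μ)
    (hs'2 : MemLp s' 2 μ) (ha2 : MemLp a 2 μ) (ha'2 : MemLp a' 2 μ)
    (ha : ∀ x, avgQ lam φ ψ a x = 0) (ha' : ∀ x, avgQ lam φ ψ a' x = 0)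
    (h : s + a =ᵐ[μ] s' + a') : s =ᵐ[μ] s' := by
  have hd2 : MemLp (s - s') 2 μ := hs2.sub hs'2
  have horth {b} (hb2 : MemLp b 2 μ) (hb : ∀ x, avgQ lam φ ψ b x = 0) :
      ∫ x, ⟪(s - s') x, b x⟫_ℝ ∂μ = 0 :=
    integral_inner_eq_zero_of_avgQ_eq_zero hφ_meas hψ_meas hμ_inv (hs.sub hs') hd2 hb2 hb
  have hdiff : s - s' =ᵐ[μ] a' - a := by
    filter_upwards [h] with x hx
    simp only [Pi.add_apply, Pi.sub_apply] at hx ⊢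
    rw [sub_eq_sub_iff_add_eq_add, hx, add_comm]
  have hnorm : ∫ x, ⟪(s - s') x, (s - s') x⟫_ℝ ∂μ = 0 := calc
    _ = ∫ x, (⟪(s - s') x, a' x⟫_ℝ - ⟪(s - s') x, a x⟫_ℝ) ∂μ := by
        refine integral_congr_ae ?_
        filter_upwards [hdiff] with x hx
        rw [← inner_sub_right]
        exact congrArg (inner ℝ _) hx
    _ = 0 := by
        rw [integral_sub (hd2.integrable_inner ha'2) (hd2.integrable_inner ha2), horth ha'2 ha',
          horth ha2 ha, sub_zero]
  filter_upwards [hd2.ae_eq_zero_of_integral_inner_self hnorm] with x hx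
  exact sub_eq_zero.mp hx

end Averaging

theorem stmt_0_general {G X : Type*} [Group G] [TopologicalSpace G] [IsTopologicalGroup G]
    [MeasurableSpace G] [BorelSpace G]
    [MeasurableSpace X]
    {k : ℕ}
    (lam : Measure G) [IsProbabilityMeasure lam]
    (hlam_right : ∀ g : G, Measure.map (fun h => h * g) lam = lam)
    (φ : G → X → X)
    (hφ_meas : Measurable fun p : G × X => φ p.1 p.2)
    (hφ_mul : ∀ g h x, φ (g * h) x = φ g (φ h x))
    (ψ : G → (EuclideanSpace ℝ (Fin k) ≃ₗᵢ[ℝ] EuclideanSpace ℝ (Fin k)))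
    (hψ_meas : Measurable fun p : G × EuclideanSpace ℝ (Fin k) => ψ p.1 p.2)
    (hψ_mul : ∀ g h v, ψ (g * h) v = ψ g (ψ h v))
    (μ : Measure X) [IsProbabilityMeasure μ]
    (hμ_inv : ∀ g : G, Measure.map (φ g) μ = μ)
    (U : Set (X → EuclideanSpace ℝ (Fin k)))
    (hU_L2 : ∀ f ∈ U, MemLp f 2 μ)
    (hU_add : ∀ f ∈ U, ∀ h ∈ U, f + h ∈ U)
    (hU_smul : ∀ (c : ℝ), ∀ f ∈ U, c • f ∈ U)
    (hU_Q : ∀ f ∈ U, avgQ lam φ ψ f ∈ U) :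
    ∀ u ∈ U,
      (∃ s ∈ U, ∃ a ∈ U,
        IsEquivariant φ ψ s ∧ (∀ x, avgQ lam φ ψ a x = 0) ∧
        u =ᵐ[μ] s + a ∧ ∫ x, (inner ℝ (s x) (a x) : ℝ) ∂μ = 0) ∧
      (∀ s ∈ U, ∀ a ∈ U, ∀ s' ∈ U, ∀ a' ∈ U,
        IsEquivariant φ ψ s → (∀ x, avgQ lam φ ψ a x = 0) →
        IsEquivariant φ ψ s' → (∀ x, avgQ lam φ ψ a' x = 0) →
        u =ᵐ[μ] s + a → u =ᵐ[μ] s' + a' →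
        s =ᵐ[μ] s' ∧ a =ᵐ[μ] a') := by
  intro u hu
  refine ⟨?_, fun s hsU a haU s' hs'U a' ha'U hs ha hs' ha' hu_sa hu_sa' => ?_⟩
  · have hsU : avgQ lam φ ψ u ∈ U := hU_Q u hu
    have haU : u - avgQ lam φ ψ u ∈ U := by
      simpa [neg_one_smul, ← sub_eq_add_neg] using hU_add u hu _ (hU_smul (-1) _ hsU)
    have hs := isEquivariant_avgQ hlam_right hφ_mul hψ_mul u
    have ha := avgQ_sub_avgQ_eq_zero hlam_right hφ_mul hψ_mul u
    exact ⟨_, hsU, _, haU, hs, ha, ae_of_all _ fun x => by simp,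
      integral_inner_eq_zero_of_avgQ_eq_zero hφ_meas hψ_meas hμ_inv hs (hU_L2 _ hsU)
        (hU_L2 _ haU) ha⟩
  · have hsa := hu_sa.symm.trans hu_sa'
    have hss' := hs.ae_eq_of_add_ae_eq_add hφ_meas hψ_meas hμ_inv hs' (hU_L2 s hsU)
      (hU_L2 s' hs'U) (hU_L2 a haU) (hU_L2 a' ha'U) ha ha' hsa
    refine ⟨hss', ?_⟩
    filter_upwards [hsa, hss'] with x hx hsx
    simp only [Pi.add_apply, hsx] at hx
    exact add_left_cancel hx

/-- Any subspace `U` of `L2(X, Y, μ)` closed under `Q` decomposes orthogonally as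
`U = S ⊕ A`, where `S` is the set of equivariant members and `A = {f : Q f = 0}`. -/
theorem stmt_0 {G X : Type*} [Group G] [TopologicalSpace G] [IsTopologicalGroup G]
    [CompactSpace G] [SecondCountableTopology G] [T2Space G]
    [MeasurableSpace G] [BorelSpace G]
    [TopologicalSpace X] [PolishSpace X] [MeasurableSpace X] [BorelSpace X]
    {k : ℕ}
    (lam : Measure G) [IsProbabilityMeasure lam]
    (hlam_left : ∀ g : G, Measure.map (fun h => g * h) lam = lam)
    (hlam_right : ∀ g : G, Measure.map (fun h => h * g) lam = lam)
    (hlam_inv : Measure.map (fun g : G => g⁻¹) lam = lam)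
    (φ : G → X → X)
    (hφ_meas : Measurable fun p : G × X => φ p.1 p.2)
    (hφ_one : ∀ x, φ 1 x = x)
    (hφ_mul : ∀ g h x, φ (g * h) x = φ g (φ h x))
    (ψ : G → (EuclideanSpace ℝ (Fin k) ≃ₗᵢ[ℝ] EuclideanSpace ℝ (Fin k)))
    (hψ_meas : Measurable fun p : G × EuclideanSpace ℝ (Fin k) => ψ p.1 p.2)
    (hψ_one : ∀ v, ψ 1 v = v)
    (hψ_mul : ∀ g h v, ψ (g * h) v = ψ g (ψ h v))
    (μ : Measure X) [IsProbabilityMeasure μ]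
    (hμ_inv : ∀ g : G, Measure.map (φ g) μ = μ)
    (U : Set (X → EuclideanSpace ℝ (Fin k)))
    (hU_L2 : ∀ f ∈ U, MemLp f 2 μ)
    (hU_zero : ((fun _ => 0) : X → EuclideanSpace ℝ (Fin k)) ∈ U)
    (hU_add : ∀ f ∈ U, ∀ h ∈ U, f + h ∈ U)
    (hU_smul : ∀ (c : ℝ), ∀ f ∈ U, c • f ∈ U)
    (hU_Q : ∀ f ∈ U, avgQ lam φ ψ f ∈ U) :
    ∀ u ∈ U,
      (∃ s ∈ U, ∃ a ∈ U,
        IsEquivariant φ ψ s ∧ (∀ x, avgQ lam φ ψ a x = 0) ∧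
        u =ᵐ[μ] s + a ∧ ∫ x, (inner ℝ (s x) (a x) : ℝ) ∂μ = 0) ∧
      (∀ s ∈ U, ∀ a ∈ U, ∀ s' ∈ U, ∀ a' ∈ U,
        IsEquivariant φ ψ s → (∀ x, avgQ lam φ ψ a x = 0) →
        IsEquivariant φ ψ s' → (∀ x, avgQ lam φ ψ a' x = 0) →
        u =ᵐ[μ] s + a → u =ᵐ[μ] s' + a' →
        s =ᵐ[μ] s' ∧ a =ᵐ[μ] a') :=
  stmt_0_general lam hlam_right φ hφ_meas hφ_mul ψ hψ_meas hψ_mul μ hμ_inv U hU_L2 hU_add hU_smul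
    hU_Q
end

section
/- For every f ∈ L2(X,Y,μ): (1) the function Qf, with values Qf(x) = ∫_G ψ(g)⁻¹ f(φ(g)x) dλ(g), is μ-measurable, and (2) Qf ∈ L2(X,Y,μ) with ‖Qf‖_μ ≤ ‖f‖_μ. -/
open MeasureTheory
open scoped ENNReal

/-!
Write `F (x, g) = ψ(g)⁻¹ f (φ(g) x)`, so that `Q f (x) = ∫ F (x, g) dλ(g)`. Since `λ` is a probability
measure, Jensen's inequality gives `‖Q f (x)‖² ≤ ∫ ‖F (x, g)‖² dλ(g)`, and integrating in `x`
bounds `‖Q f‖_μ` by the `L²(μ × λ)` norm of `F`. As `ψ(g)` is an isometry, `‖F (x, g)‖ = ‖f (φ(g) x)‖`,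
and `(x, g) ↦ φ(g) x` pushes `μ × λ` forward to `μ` by invariance of `μ`; hence that norm is `‖f‖_μ`.
Measurability of `Q f` comes from the same joint measurability of `F` through Fubini.
-/

section

variable {G X E : Type*} [MeasurableSpace G] [MeasurableSpace X]

open scoped InnerProductSpace in
theorem measurable_linearIsometryEquiv_symm_apply [NormedAddCommGroup E] [InnerProductSpace ℝ E]
    [FiniteDimensional ℝ E] [MeasurableSpace E] [BorelSpace E] {ψ : G → E ≃ₗᵢ[ℝ] E}
    (hψ : Measurable fun p : G × E => ψ p.1 p.2) :
    Measurable fun p : G × E => (ψ p.1).symm p.2 := by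
  let b := stdOrthonormalBasis ℝ E
  -- `(ψ g).symm` is the adjoint of `ψ g`, so its coefficients are `⟪ψ g (b i), v⟫`.
  have hcoeff (g : G) (v : E) : (ψ g).symm v = ∑ i, ⟪ψ g (b i), v⟫_ℝ • b i := by
    conv_lhs => rw [← b.sum_repr' ((ψ g).symm v)]
    refine Finset.sum_congr rfl fun i _ => ?_
    rw [← (ψ g).inner_map_map, LinearIsometryEquiv.apply_symm_apply]
  simp_rw [hcoeff]
  exact Finset.measurable_sum _ fun i _ =>
    ((hψ.comp (measurable_fst.prodMk measurable_const)).inner measurable_snd).smul_const _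

theorem enorm_integral_rpow_le_lintegral [NormedAddCommGroup E] [NormedSpace ℝ E]
    (ν : Measure G) [IsProbabilityMeasure ν] {F : G → E} (hF : AEStronglyMeasurable F ν)
    {r : ℝ} (hr : 1 ≤ r) :
    ‖∫ g, F g ∂ν‖ₑ ^ r ≤ ∫⁻ g, ‖F g‖ₑ ^ r ∂ν := by
  have h := (enorm_integral_le_lintegral_enorm F).trans
    ((eLpNorm_one_eq_lintegral_enorm).symm.trans_le
      (eLpNorm_le_eLpNorm_of_exponent_le (ENNReal.one_le_ofReal.2 hr) hF))
  rw [eLpNorm_eq_lintegral_rpow_enorm_toReal (ENNReal.ofReal_pos.2 (by linarith)).ne'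
    ENNReal.ofReal_ne_top,
    ENNReal.toReal_ofReal (by linarith)] at h
  calc ‖∫ g, F g ∂ν‖ₑ ^ r ≤ ((∫⁻ g, ‖F g‖ₑ ^ r ∂ν) ^ (1 / r)) ^ r := by gcongr
    _ = ∫⁻ g, ‖F g‖ₑ ^ r ∂ν := by
      rw [← ENNReal.rpow_mul, one_div_mul_cancel (by linarith), ENNReal.rpow_one]

theorem eLpNorm_integral_prod_right_le [NormedAddCommGroup E] [NormedSpace ℝ E]
    (μ : Measure X) (ν : Measure G) [IsProbabilityMeasure ν]
    {F : X × G → E} (hF : AEStronglyMeasurable F (μ.prod ν)) {p : ℝ≥0∞} (hp : 1 ≤ p)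
    (hp_top : p ≠ ∞) :
    eLpNorm (fun x => ∫ g, F (x, g) ∂ν) p μ ≤ eLpNorm F p (μ.prod ν) := by
  have hp₀ : p ≠ 0 := (zero_lt_one.trans_le hp).ne'
  have hr : 1 ≤ p.toReal := by simpa using ENNReal.toReal_mono hp_top hp
  rw [eLpNorm_eq_lintegral_rpow_enorm_toReal hp₀ hp_top,
    eLpNorm_eq_lintegral_rpow_enorm_toReal hp₀ hp_top]
  gcongr
  calc ∫⁻ x, ‖∫ g, F (x, g) ∂ν‖ₑ ^ p.toReal ∂μ
      ≤ ∫⁻ x, ∫⁻ g, ‖F (x, g)‖ₑ ^ p.toReal ∂ν ∂μ := by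
        refine lintegral_mono_ae ?_
        filter_upwards [hF.prodMk_left] with x hx
        exact enorm_integral_rpow_le_lintegral ν hx hr
    _ = ∫⁻ z, ‖F z‖ₑ ^ p.toReal ∂(μ.prod ν) :=
        (lintegral_prod _ (hF.enorm.pow_const _)).symm

theorem measurePreserving_apply_prod (μ : Measure X) [SFinite μ] (ν : Measure G)
    [IsProbabilityMeasure ν] {φ : G → X → X} (hφ : Measurable fun p : G × X => φ p.1 p.2)
    (hμ : ∀ g, Measure.map (φ g) μ = μ) :
    MeasurePreserving (fun p : X × G => φ p.2 p.1) (μ.prod ν) μ :=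
  (measurePreserving_snd.comp ((MeasurePreserving.id ν).skew_product hφ (ae_of_all _ hμ))).comp
    Measure.measurePreserving_swap

end

theorem stmt_1_general {G X : Type*}
    [MeasurableSpace G] [MeasurableSpace X]
    {k : ℕ}
    (lam : Measure G) [IsProbabilityMeasure lam]
    (φ : G → X → X)
    (hφ_meas : Measurable fun p : G × X => φ p.1 p.2)
    (ψ : G → (EuclideanSpace ℝ (Fin k) ≃ₗᵢ[ℝ] EuclideanSpace ℝ (Fin k)))
    (hψ_meas : Measurable fun p : G × EuclideanSpace ℝ (Fin k) => ψ p.1 p.2)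
    (μ : Measure X) [IsProbabilityMeasure μ]
    (hμ_inv : ∀ g : G, Measure.map (φ g) μ = μ)
    (f : X → EuclideanSpace ℝ (Fin k))
    (hf : MemLp f 2 μ) :
    AEStronglyMeasurable (avgQ lam φ ψ f) μ ∧
    MemLp (avgQ lam φ ψ f) 2 μ ∧
    eLpNorm (avgQ lam φ ψ f) 2 μ ≤ eLpNorm f 2 μ := by
  have hact := measurePreserving_apply_prod μ lam hφ_meas hμ_inv
  have hf_act : AEStronglyMeasurable (fun p : X × G => f (φ p.2 p.1)) (μ.prod lam) :=
    hf.1.comp_measurePreserving hact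
  have hF : AEStronglyMeasurable (fun p : X × G => (ψ p.2).symm (f (φ p.2 p.1))) (μ.prod lam) :=
    ((measurable_linearIsometryEquiv_symm_apply hψ_meas).comp_aemeasurable
      (measurable_snd.aemeasurable.prodMk hf_act.aemeasurable)).aestronglyMeasurable
  have hQ : AEStronglyMeasurable (avgQ lam φ ψ f) μ := hF.integral_prod_right'
  have hbound : eLpNorm (avgQ lam φ ψ f) 2 μ ≤ eLpNorm f 2 μ :=
    calc eLpNorm (avgQ lam φ ψ f) 2 μ
        ≤ eLpNorm (fun p : X × G => (ψ p.2).symm (f (φ p.2 p.1))) 2 (μ.prod lam) :=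
          eLpNorm_integral_prod_right_le μ lam hF one_le_two ENNReal.ofNat_ne_top
      _ = eLpNorm (fun p : X × G => f (φ p.2 p.1)) 2 (μ.prod lam) :=
          eLpNorm_congr_enorm_ae (ae_of_all _ fun p => (ψ p.2).symm.enorm_map _)
      _ = eLpNorm f 2 μ := eLpNorm_comp_measurePreserving hf.1 hact
  exact ⟨hQ, ⟨hQ, hbound.trans_lt hf.2⟩, hbound⟩

/-- For every `f ∈ L2(X,Y,μ)`, the averaged function `Q f` is `μ`-measurable and
belongs to `L2(X,Y,μ)` with `‖Q f‖_μ ≤ ‖f‖_μ`. -/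
theorem stmt_1 {G X : Type*} [Group G] [TopologicalSpace G] [IsTopologicalGroup G]
    [CompactSpace G] [SecondCountableTopology G] [T2Space G]
    [MeasurableSpace G] [BorelSpace G]
    [TopologicalSpace X] [PolishSpace X] [MeasurableSpace X] [BorelSpace X]
    {k : ℕ}
    (lam : Measure G) [IsProbabilityMeasure lam]
    (hlam_left : ∀ g : G, Measure.map (fun h => g * h) lam = lam)
    (hlam_right : ∀ g : G, Measure.map (fun h => h * g) lam = lam)
    (hlam_inv : Measure.map (fun g : G => g⁻¹) lam = lam)
    (φ : G → X → X)
    (hφ_meas : Measurable fun p : G × X => φ p.1 p.2)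
    (hφ_one : ∀ x, φ 1 x = x)
    (hφ_mul : ∀ g h x, φ (g * h) x = φ g (φ h x))
    (ψ : G → (EuclideanSpace ℝ (Fin k) ≃ₗᵢ[ℝ] EuclideanSpace ℝ (Fin k)))
    (hψ_meas : Measurable fun p : G × EuclideanSpace ℝ (Fin k) => ψ p.1 p.2)
    (hψ_one : ∀ v, ψ 1 v = v)
    (hψ_mul : ∀ g h v, ψ (g * h) v = ψ g (ψ h v))
    (μ : Measure X) [IsProbabilityMeasure μ]
    (hμ_inv : ∀ g : G, Measure.map (φ g) μ = μ)
    (f : X → EuclideanSpace ℝ (Fin k))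
    (hf : MemLp f 2 μ) :
    AEStronglyMeasurable (avgQ lam φ ψ f) μ ∧
    MemLp (avgQ lam φ ψ f) 2 μ ∧
    eLpNorm (avgQ lam φ ψ f) 2 μ ≤ eLpNorm f 2 μ :=
  stmt_1_general lam φ hφ_meas ψ hψ_meas μ hμ_inv f hf
end

section
/- Let μ be a G-invariant probability measure on ℝ^d with finite, positive definite second-moment matrix Σ = E[XXᵀ] for X ~ μ. Let ξ be a random vector in ℝ^k independent of X with E[ξ] = 0 and finite variance, and set Y = ΘᵀX + ξ, where h_Θ(x) = Θᵀx is G-equivariant. Then for every W ∈ ℝ^{d×k}, the generalisation gap satisfies E[‖Y − f_W(X)‖₂²] − E[‖Y − f_{W̄}(X)‖₂²] = ‖Σ^{1/2} W⊥‖_F², where W̄ = Ψ(W), W⊥ = W − Ψ(W), and Ψ(W) = ∫_G φ(g) W ψ(g⁻¹) dλ(g). -/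
/-!
Write `Σ` for the second-moment matrix of `μ`. Since the noise is centred and independent of
`X`, the risk of `W` is `tr((Θ - W)ᵀ Σ (Θ - W)) + E‖ξ‖²`. Invariance of `μ` makes `Σ` commute
with `φ`, and both `Θ` (by assumption) and `W̄` (by left invariance of `λ`) intertwine `φ` and `ψ`,
so `N = (Θ - W̄)ᵀ Σ` satisfies `N φ(g) = ψ(g) N`. Then `tr(N φ(g) W ψ(g⁻¹)) = tr(N W)` for every
`g`, and averaging over `G` gives `tr(N W̄) = tr(N W)`: `Θ - W̄` is `Σ`-orthogonal to `W - W̄`, and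
the gap is `tr((W - W̄)ᵀ Σ (W - W̄))` by Pythagoras.
-/

open MeasureTheory ProbabilityTheory Matrix

/-- The square root of a positive semidefinite matrix, as `Matrix.PosSemidef.sqrt` was
defined in the older Mathlib. -/
noncomputable def Matrix.PosSemidef.sqrtOld {n : Type*} [Fintype n] [DecidableEq n]
    {A : Matrix n n ℝ} (hA : A.PosSemidef) : Matrix n n ℝ :=
  hA.1.eigenvectorUnitary.1 * diagonal ((↑) ∘ (√·) ∘ hA.1.eigenvalues) *
    (star hA.1.eigenvectorUnitary : Matrix n n ℝ)

theorem Matrix.PosSemidef.sqrtOld_mul_self {n : Type*} [Fintype n] [DecidableEq n]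
    {A : Matrix n n ℝ} (hA : A.PosSemidef) : hA.sqrtOld * hA.sqrtOld = A := by
  set U : Matrix n n ℝ := hA.1.eigenvectorUnitary.1
  have hUU : star U * U = 1 := Unitary.coe_star_mul_self _
  have hD : diagonal ((↑) ∘ (√·) ∘ hA.1.eigenvalues) * diagonal ((↑) ∘ (√·) ∘ hA.1.eigenvalues)
      = diagonal (RCLike.ofReal ∘ hA.1.eigenvalues : n → ℝ) := by
    rw [diagonal_mul_diagonal]
    congr 1
    funext i
    simp [Real.mul_self_sqrt (hA.eigenvalues_nonneg i)]
  conv_rhs => rw [hA.1.spectral_theorem, Unitary.conjStarAlgAut_apply]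
  calc hA.sqrtOld * hA.sqrtOld
      = U * diagonal ((↑) ∘ (√·) ∘ hA.1.eigenvalues) * (star U * U) *
          diagonal ((↑) ∘ (√·) ∘ hA.1.eigenvalues) * star U := by
        simp only [sqrtOld, U, Matrix.mul_assoc]
    _ = _ := by rw [hUU, Matrix.mul_one, Matrix.mul_assoc _ (diagonal _) (diagonal _), hD]

section MatrixIntegral

variable {α β l m n p : Type*} [MeasurableSpace α] {μ : Measure α}

/-- Entrywise Bochner integral: `Matrix` carries no global norm, so `∫` is not available. -/
noncomputable def matrixIntegral (μ : Measure α) (F : α → Matrix m n ℝ) : Matrix m n ℝ :=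
  of fun i j => ∫ a, F a i j ∂μ

theorem integrable_mul_mul_apply [Fintype m] [Fintype n] {F : α → Matrix m n ℝ}
    (hF : ∀ i j, Integrable (fun a => F a i j) μ) (A : Matrix l m ℝ) (B : Matrix n p ℝ)
    (i : l) (j : p) : Integrable (fun a => (A * F a * B) i j) μ := by
  simp only [mul_apply, Finset.sum_mul]
  exact integrable_finsetSum _ fun b _ => integrable_finsetSum _ fun a _ =>
    ((hF a b).const_mul _).mul_const _

theorem mul_matrixIntegral_mul [Fintype m] [Fintype n] {F : α → Matrix m n ℝ}
    (hF : ∀ i j, Integrable (fun a => F a i j) μ) (A : Matrix l m ℝ) (B : Matrix n p ℝ) :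
    A * matrixIntegral μ F * B = matrixIntegral μ fun a => A * F a * B := by
  ext i j
  simp only [matrixIntegral, mul_apply, of_apply, Finset.sum_mul]
  rw [integral_finsetSum _ fun b _ => integrable_finsetSum _ fun a _ =>
    ((hF a b).const_mul _).mul_const _]
  refine Finset.sum_congr rfl fun b _ => ?_
  rw [integral_finsetSum _ fun a _ => ((hF a b).const_mul _).mul_const _]
  simp only [integral_mul_const, integral_const_mul]

theorem trace_matrixIntegral [Fintype n] {F : α → Matrix n n ℝ}
    (hF : ∀ i j, Integrable (fun a => F a i j) μ) :
    (matrixIntegral μ F).trace = ∫ a, (F a).trace ∂μ :=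
  (integral_finsetSum _ fun i _ => hF i i).symm

theorem matrixIntegral_map [MeasurableSpace β] {F : α → Matrix m n ℝ} {ν : Measure β}
    {f : β → α} (hf : AEMeasurable f ν) (hF : ∀ i j, Measurable fun a => F a i j) :
    matrixIntegral (ν.map f) F = matrixIntegral ν fun b => F (f b) := by
  ext i j
  exact integral_map hf (hF i j).aestronglyMeasurable

end MatrixIntegral

section SecondMoment

variable {ι κ : Type*} {μ : Measure (ι → ℝ)}

noncomputable def secondMoment (μ : Measure (ι → ℝ)) : Matrix ι ι ℝ :=
  matrixIntegral μ fun x => vecMulVec x x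

theorem secondMoment_isSymm : (secondMoment μ).IsSymm := by
  ext i j
  simp only [secondMoment, matrixIntegral, transpose_apply, of_apply, vecMulVec_apply, mul_comm]

theorem secondMoment_map_mulVec [Fintype ι] (hmom : ∀ i j, Integrable (fun x => x i * x j) μ)
    (A : Matrix ι ι ℝ) : secondMoment (μ.map A.mulVec) = A * secondMoment μ * Aᵀ := by
  have hA : Measurable A.mulVec := (continuous_const.matrix_mulVec continuous_id).measurable
  rw [secondMoment, matrixIntegral_map (F := fun x => vecMulVec x x) hA.aemeasurable
    fun i j => (measurable_pi_apply i).mul (measurable_pi_apply j),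
    secondMoment, mul_matrixIntegral_mul (F := fun x => vecMulVec x x) hmom]
  simp only [mul_vecMulVec, vecMulVec_mul, vecMul_transpose]

theorem memLp_vecMul_apply [Fintype ι] (hmom : ∀ i j, Integrable (fun x => x i * x j) μ)
    (M : Matrix ι κ ℝ) (j : κ) : MemLp (fun x => (x ᵥ* M) j) 2 μ := by
  have hcoord : ∀ i, MemLp (fun x : ι → ℝ => x i) 2 μ := fun i =>
    (memLp_two_iff_integrable_sq (measurable_pi_apply i).aestronglyMeasurable).2
      (by simpa only [sq] using hmom i i)
  simp only [vecMul, dotProduct]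
  exact memLp_finsetSum _ fun i _ => (hcoord i).mul_const _

theorem integral_sum_sq_vecMul [Fintype ι] [Fintype κ]
    (hmom : ∀ i j, Integrable (fun x => x i * x j) μ) (M : Matrix ι κ ℝ) :
    ∫ x, ∑ j, (x ᵥ* M) j ^ 2 ∂μ = (Mᵀ * secondMoment μ * M).trace := by
  rw [secondMoment, mul_matrixIntegral_mul (F := fun x => vecMulVec x x) hmom,
    trace_matrixIntegral (integrable_mul_mul_apply (F := fun x => vecMulVec x x) hmom _ _)]
  simp only [mul_vecMulVec, vecMulVec_mul, trace_vecMulVec, mulVec_transpose, dotProduct, sq]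

end SecondMoment

section Noise

variable {Ω κ : Type*} [MeasurableSpace Ω] {P : Measure Ω}

theorem integral_add_sq_of_indepFun {u e : Ω → ℝ} (h : IndepFun u e P) (hu : MemLp u 2 P)
    (he : MemLp e 2 P) (he0 : ∫ ω, e ω ∂P = 0) :
    ∫ ω, (u ω + e ω) ^ 2 ∂P = ∫ ω, u ω ^ 2 ∂P + ∫ ω, e ω ^ 2 ∂P := by
  have hue : Integrable (fun ω => 2 * (u ω * e ω)) P := (hu.integrable_mul he).const_mul 2
  have hcross : ∫ ω, 2 * (u ω * e ω) ∂P = 0 := by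
    rw [integral_const_mul, h.integral_fun_mul_eq_mul_integral hu.1 he.1, he0, mul_zero,
      mul_zero]
  simp only [add_sq, mul_assoc]
  rw [integral_add (f := fun ω => u ω ^ 2 + 2 * (u ω * e ω)) (hu.integrable_sq.add hue)
    he.integrable_sq, integral_add hu.integrable_sq hue, hcross, add_zero]

theorem integral_sum_sq_add_of_indepFun [Fintype κ] {U ξ : Ω → κ → ℝ} (h : IndepFun U ξ P)
    (hU : ∀ j, MemLp (fun ω => U ω j) 2 P) (hξ : ∀ j, MemLp (fun ω => ξ ω j) 2 P)
    (hξ0 : ∀ j, ∫ ω, ξ ω j ∂P = 0) :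
    ∫ ω, ∑ j, (U ω j + ξ ω j) ^ 2 ∂P = ∫ ω, ∑ j, U ω j ^ 2 ∂P + ∫ ω, ∑ j, ξ ω j ^ 2 ∂P := by
  rw [integral_finsetSum (f := fun j ω => (U ω j + ξ ω j) ^ 2) _
      fun j _ => ((hU j).add (hξ j)).integrable_sq,
    integral_finsetSum _ fun j _ => (hU j).integrable_sq,
    integral_finsetSum _ fun j _ => (hξ j).integrable_sq, ← Finset.sum_add_distrib]
  exact Finset.sum_congr rfl fun j _ => integral_add_sq_of_indepFun
    (h.comp (measurable_pi_apply j) (measurable_pi_apply j)) (hU j) (hξ j) (hξ0 j)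

theorem integral_sum_sq_vecMul_add_of_indepFun {ι : Type*} [Fintype ι] [Fintype κ]
    {μ : Measure (ι → ℝ)} {X : Ω → ι → ℝ} {ξ : Ω → κ → ℝ} (hX : Measurable X)
    (hlaw : P.map X = μ) (h : IndepFun X ξ P) (hmom : ∀ i j, Integrable (fun x => x i * x j) μ)
    (hξ : ∀ j, MemLp (fun ω => ξ ω j) 2 P) (hξ0 : ∀ j, ∫ ω, ξ ω j ∂P = 0) (A : Matrix ι κ ℝ) :
    ∫ ω, ∑ j, ((X ω ᵥ* A) j + ξ ω j) ^ 2 ∂P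
      = (Aᵀ * secondMoment μ * A).trace + ∫ ω, ∑ j, ξ ω j ^ 2 ∂P := by
  subst hlaw
  have hA : Measurable fun x : ι → ℝ => x ᵥ* A :=
    (continuous_id.matrix_vecMul continuous_const).measurable
  have hXA : ∀ j, MemLp (fun ω => (X ω ᵥ* A) j) 2 P := fun j =>
    (memLp_map_measure_iff (memLp_vecMul_apply hmom A j).1 hX.aemeasurable).1
      (memLp_vecMul_apply hmom A j)
  have hsq : Measurable fun x : ι → ℝ => ∑ j, (x ᵥ* A) j ^ 2 :=
    Finset.measurable_sum _ fun j _ => ((measurable_pi_apply j).comp hA).pow_const 2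
  rw [integral_sum_sq_add_of_indepFun (U := fun ω => X ω ᵥ* A) (ξ := ξ)
    (h.comp hA measurable_id) hXA hξ hξ0, ← integral_sum_sq_vecMul hmom,
    integral_map hX.aemeasurable hsq.aestronglyMeasurable]

end Noise

section Representation

variable {G : Type*} [Group G] {m n p : Type*} [Fintype m] [DecidableEq m] [Fintype n]
  [DecidableEq n] [Fintype p] [DecidableEq p]

def orthogonalRep (φ : G → Matrix n n ℝ) (h_one : φ 1 = 1)
    (h_mul : ∀ g h, φ (g * h) = φ g * φ h) (h_orth : ∀ g, (φ g)ᵀ * φ g = 1) :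
    G →* orthogonalGroup n ℝ where
  toFun g := ⟨φ g, (mem_orthogonalGroup_iff' n ℝ).2 (h_orth g)⟩
  map_one' := Subtype.ext h_one
  map_mul' g h := Subtype.ext (h_mul g h)

theorem coe_map_inv_eq_transpose (ρ : G →* orthogonalGroup n ℝ) (g : G) :
    (ρ g⁻¹ : Matrix n n ℝ) = (ρ g : Matrix n n ℝ)ᵀ := by
  rw [map_inv]
  rfl

theorem coe_map_inv_mul_coe_map (ρ : G →* orthogonalGroup n ℝ) (g : G) :
    (ρ g⁻¹ : Matrix n n ℝ) * ρ g = 1 := by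
  rw [coe_map_inv_eq_transpose, ← mem_orthogonalGroup_iff' n ℝ]
  exact (ρ g).2

/-- `x ↦ Bᵀ x` is equivariant from `ρ` to `σ`. -/
def Intertwines (ρ : G →* orthogonalGroup m ℝ) (σ : G →* orthogonalGroup n ℝ)
    (B : Matrix m n ℝ) : Prop :=
  ∀ g, (ρ g : Matrix m m ℝ) * B = B * (σ g : Matrix n n ℝ)

variable {ρ : G →* orthogonalGroup m ℝ} {σ : G →* orthogonalGroup n ℝ}
  {τ : G →* orthogonalGroup p ℝ}

theorem Intertwines.sub {B C : Matrix m n ℝ} (hB : Intertwines ρ σ B)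
    (hC : Intertwines ρ σ C) : Intertwines ρ σ (B - C) := fun g => by
  rw [Matrix.mul_sub, Matrix.sub_mul, hB g, hC g]

theorem Intertwines.mul {A : Matrix m n ℝ} {B : Matrix n p ℝ} (hA : Intertwines ρ σ A)
    (hB : Intertwines σ τ B) : Intertwines ρ τ (A * B) := fun g => by
  rw [← Matrix.mul_assoc, hA g, Matrix.mul_assoc, hB g, Matrix.mul_assoc]

theorem Intertwines.transpose {B : Matrix m n ℝ} (hB : Intertwines ρ σ B) :
    Intertwines σ ρ Bᵀ := fun g => by
  have h := congrArg Matrix.transpose (hB g⁻¹)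
  rwa [transpose_mul, transpose_mul, coe_map_inv_eq_transpose, coe_map_inv_eq_transpose,
    transpose_transpose, transpose_transpose, eq_comm] at h

theorem intertwines_of_mulVec_vecMul {B : Matrix m n ℝ}
    (h : ∀ g x, ((ρ g : Matrix m m ℝ) *ᵥ x) ᵥ* B = (σ g : Matrix n n ℝ) *ᵥ (x ᵥ* B)) :
    Intertwines ρ σ B := fun g => by
  rw [ext_iff_vecMul]
  intro x
  have hx := h g⁻¹ x
  rwa [← vecMul_transpose, ← vecMul_transpose, vecMul_vecMul, vecMul_vecMul,
    coe_map_inv_eq_transpose, coe_map_inv_eq_transpose, transpose_transpose,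
    transpose_transpose] at hx

theorem intertwines_secondMoment {μ : Measure (m → ℝ)}
    (hμ : ∀ g, μ.map (ρ g : Matrix m m ℝ).mulVec = μ)
    (hmom : ∀ i j, Integrable (fun x => x i * x j) μ) : Intertwines ρ ρ (secondMoment μ) :=
  fun g => by
  have hconj := secondMoment_map_mulVec hmom (ρ g : Matrix m m ℝ)
  rw [hμ g] at hconj
  conv_rhs =>
    rw [hconj, Matrix.mul_assoc, (mem_orthogonalGroup_iff' m ℝ).1 (ρ g).2, Matrix.mul_one]

end Representation

section OrbitAverage

variable {G : Type*} [Group G] [MeasurableSpace G] {m n : Type*} [Fintype m] [DecidableEq m]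
  [Fintype n] [DecidableEq n] {lam : Measure G}
  {ρ : G →* orthogonalGroup m ℝ} {σ : G →* orthogonalGroup n ℝ}

noncomputable def orbitAverage (lam : Measure G) (ρ : G →* orthogonalGroup m ℝ)
    (σ : G →* orthogonalGroup n ℝ) (W : Matrix m n ℝ) : Matrix m n ℝ :=
  matrixIntegral lam fun g => (ρ g : Matrix m m ℝ) * W * (σ g⁻¹ : Matrix n n ℝ)

theorem integrable_orthogonalGroup_apply [IsFiniteMeasure lam]
    (hρ : ∀ i j, Measurable fun g => (ρ g : Matrix m m ℝ) i j) (i j : m) :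
    Integrable (fun g => (ρ g : Matrix m m ℝ) i j) lam :=
  .of_bound (hρ i j).aestronglyMeasurable 1
    (ae_of_all _ fun g => entry_norm_bound_of_unitary (ρ g).2 i j)

theorem measurable_orbit_apply (hρ : ∀ i j, Measurable fun g => (ρ g : Matrix m m ℝ) i j)
    (hσ : ∀ i j, Measurable fun g => (σ g : Matrix n n ℝ) i j) (W : Matrix m n ℝ)
    (i : m) (j : n) :
    Measurable fun g => ((ρ g : Matrix m m ℝ) * W * (σ g⁻¹ : Matrix n n ℝ)) i j := by
  simp only [coe_map_inv_eq_transpose, mul_apply, transpose_apply]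
  fun_prop

theorem integrable_orbit_apply [IsFiniteMeasure lam]
    (hρ : ∀ i j, Measurable fun g => (ρ g : Matrix m m ℝ) i j)
    (hσ : ∀ i j, Measurable fun g => (σ g : Matrix n n ℝ) i j) (W : Matrix m n ℝ)
    (i : m) (j : n) :
    Integrable (fun g => ((ρ g : Matrix m m ℝ) * W * (σ g⁻¹ : Matrix n n ℝ)) i j) lam := by
  simp only [coe_map_inv_eq_transpose, mul_apply, transpose_apply, Finset.sum_mul]
  exact integrable_finsetSum _ fun b _ => integrable_finsetSum _ fun a _ =>
    ((integrable_orthogonalGroup_apply hρ i a).mul_const _).mul_bdd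
      (hσ j b).aestronglyMeasurable (ae_of_all _ fun g => entry_norm_bound_of_unitary (σ g).2 j b)

theorem intertwines_orbitAverage [IsFiniteMeasure lam] [NeZero lam]
    (hlam : ∀ g : G, lam.map (g * ·) = lam)
    (hρ : ∀ i j, Measurable fun g => (ρ g : Matrix m m ℝ) i j)
    (hσ : ∀ i j, Measurable fun g => (σ g : Matrix n n ℝ) i j) (W : Matrix m n ℝ) :
    Intertwines ρ σ (orbitAverage lam ρ σ W) := fun g => by
  -- `Measure.map` along a map that is not a.e.-measurable is `0`.
  have hmul : AEMeasurable (g * ·) lam := .of_map_ne_zero (by rw [hlam g]; exact NeZero.ne lam)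
  have hconj : (ρ g : Matrix m m ℝ) * orbitAverage lam ρ σ W * (σ g⁻¹ : Matrix n n ℝ)
      = orbitAverage lam ρ σ W := by
    rw [orbitAverage, mul_matrixIntegral_mul (integrable_orbit_apply hρ hσ W)]
    conv_rhs => rw [← hlam g, matrixIntegral_map hmul (measurable_orbit_apply hρ hσ W)]
    simp only [_root_.mul_inv_rev, map_mul, Submonoid.coe_mul, Matrix.mul_assoc]
  conv_rhs => rw [← hconj, Matrix.mul_assoc, coe_map_inv_mul_coe_map, Matrix.mul_one]

theorem trace_mul_orbitAverage [IsProbabilityMeasure lam]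
    (hρ : ∀ i j, Measurable fun g => (ρ g : Matrix m m ℝ) i j)
    (hσ : ∀ i j, Measurable fun g => (σ g : Matrix n n ℝ) i j) {N : Matrix n m ℝ}
    (hN : Intertwines σ ρ N) (W : Matrix m n ℝ) :
    (N * orbitAverage lam ρ σ W).trace = (N * W).trace := by
  have hconst : ∀ g, (N * ((ρ g : Matrix m m ℝ) * W * (σ g⁻¹ : Matrix n n ℝ)) * 1).trace
      = (N * W).trace := fun g => by
    rw [Matrix.mul_one, ← Matrix.mul_assoc, ← Matrix.mul_assoc, ← hN g, trace_mul_comm]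
    simp only [← Matrix.mul_assoc, coe_map_inv_mul_coe_map, Matrix.one_mul]
  rw [← Matrix.mul_one (N * _), orbitAverage,
    mul_matrixIntegral_mul (integrable_orbit_apply hρ hσ W),
    trace_matrixIntegral (integrable_mul_mul_apply (integrable_orbit_apply hρ hσ W) _ _)]
  simp only [hconst, integral_const, probReal_univ, one_smul]

end OrbitAverage

theorem trace_sub_transpose_mul_mul_sub {R m n : Type*} [CommRing R] [Fintype m] [Fintype n]
    {S : Matrix m m R} (hS : S.IsSymm) {B C : Matrix m n R} (h : (Bᵀ * S * C).trace = 0) :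
    ((B - C)ᵀ * S * (B - C)).trace = (Bᵀ * S * B).trace + (Cᵀ * S * C).trace := by
  have h' : (Cᵀ * S * B).trace = 0 := by
    rw [← trace_transpose, transpose_mul, transpose_mul, transpose_transpose, hS.eq,
      ← Matrix.mul_assoc, h]
  simp only [transpose_sub, Matrix.sub_mul, Matrix.mul_sub, trace_sub, h, h']
  ring

theorem stmt_11_general {G : Type*} [Group G]
    [MeasurableSpace G]
    (lam : Measure G) [IsProbabilityMeasure lam]
    (hlam_left : ∀ g : G, Measure.map (fun h => g * h) lam = lam)
    {d k : ℕ}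
    (φ : G → Matrix (Fin d) (Fin d) ℝ)
    (hφ_meas : ∀ i j, Measurable fun g => φ g i j)
    (hφ_one : φ 1 = 1)
    (hφ_mul : ∀ g h, φ (g * h) = φ g * φ h)
    (hφ_orth : ∀ g, (φ g)ᵀ * φ g = 1)
    (ψ : G → Matrix (Fin k) (Fin k) ℝ)
    (hψ_meas : ∀ i j, Measurable fun g => ψ g i j)
    (hψ_one : ψ 1 = 1)
    (hψ_mul : ∀ g h, ψ (g * h) = ψ g * ψ h)
    (hψ_orth : ∀ g, (ψ g)ᵀ * ψ g = 1)
    (μ : Measure (Fin d → ℝ))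
    (hμ_inv : ∀ g : G, Measure.map ((φ g).mulVec) μ = μ)
    (hmom : ∀ i j, Integrable (fun x => x i * x j) μ)
    (Sig : Matrix (Fin d) (Fin d) ℝ)
    (hSig : ∀ i j, Sig i j = ∫ x, x i * x j ∂μ)
    (hSig_pd : Sig.PosDef)
    (Θ : Matrix (Fin d) (Fin k) ℝ)
    (hΘ_equiv : ∀ g x, ((φ g).mulVec x) ᵥ* Θ = (ψ g).mulVec (x ᵥ* Θ))
    {Ω : Type*} [MeasurableSpace Ω] (P : Measure Ω)
    (X : Ω → Fin d → ℝ) (ξ : Ω → Fin k → ℝ)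
    (hX_meas : Measurable X) (hξ_meas : Measurable ξ)
    (hX_law : Measure.map X P = μ)
    (h_indep : IndepFun X ξ P)
    (hξ_mean : ∀ j, ∫ ω, ξ ω j ∂P = 0)
    (hξ_L2 : ∀ j, Integrable (fun ω => (ξ ω j) ^ 2) P)
    (W : Matrix (Fin d) (Fin k) ℝ)
    (Wbar : Matrix (Fin d) (Fin k) ℝ)
    (hWbar : ∀ i j, Wbar i j = ∫ g, (φ g * W * ψ g⁻¹) i j ∂lam) :
    (∫ ω, ∑ j, (((X ω ᵥ* Θ) j + ξ ω j) - (X ω ᵥ* W) j) ^ 2 ∂P)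
        - (∫ ω, ∑ j, (((X ω ᵥ* Θ) j + ξ ω j) - (X ω ᵥ* Wbar) j) ^ 2 ∂P)
      = (((W - Wbar)ᵀ * hSig_pd.posSemidef.sqrtOld)
          * (hSig_pd.posSemidef.sqrtOld * (W - Wbar))).trace := by
  let ρ := orthogonalRep φ hφ_one hφ_mul hφ_orth
  let σ := orthogonalRep ψ hψ_one hψ_mul hψ_orth
  have hSig' : Sig = secondMoment μ := Matrix.ext hSig
  have hWbar' : Wbar = orbitAverage lam ρ σ W := Matrix.ext hWbar
  have hξ_L2' : ∀ j, MemLp (fun ω => ξ ω j) 2 P := fun j =>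
    (memLp_two_iff_integrable_sq ((measurable_pi_apply j).comp hξ_meas).aestronglyMeasurable).2
      (hξ_L2 j)
  have hrisk : ∀ M, ∫ ω, ∑ j, (((X ω ᵥ* Θ) j + ξ ω j) - (X ω ᵥ* M) j) ^ 2 ∂P
      = ((Θ - M)ᵀ * Sig * (Θ - M)).trace + ∫ ω, ∑ j, ξ ω j ^ 2 ∂P := fun M => by
    rw [hSig', ← integral_sum_sq_vecMul_add_of_indepFun hX_meas hX_law h_indep hmom hξ_L2'
      hξ_mean]
    simp only [vecMul_sub, Pi.sub_apply, add_sub_right_comm]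
  have hN : Intertwines σ ρ ((Θ - Wbar)ᵀ * Sig) := by
    rw [hSig', hWbar']
    exact ((intertwines_of_mulVec_vecMul hΘ_equiv).sub
      (intertwines_orbitAverage hlam_left hφ_meas hψ_meas W)).transpose.mul
      (intertwines_secondMoment hμ_inv hmom)
  have hcross : ((Θ - Wbar)ᵀ * Sig * (W - Wbar)).trace = 0 := by
    have h := trace_mul_orbitAverage (lam := lam) hφ_meas hψ_meas hN W
    rw [← hWbar'] at h
    rw [Matrix.mul_sub, trace_sub, h, sub_self]
  have hsqrt : (W - Wbar)ᵀ * hSig_pd.posSemidef.sqrtOld * (hSig_pd.posSemidef.sqrtOld * (W - Wbar))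
      = (W - Wbar)ᵀ * Sig * (W - Wbar) := by
    rw [Matrix.mul_assoc, ← Matrix.mul_assoc hSig_pd.posSemidef.sqrtOld,
      hSig_pd.posSemidef.sqrtOld_mul_self, Matrix.mul_assoc]
  rw [hrisk, hrisk, add_sub_add_right_eq_sub, ← sub_sub_sub_cancel_right Θ W Wbar,
    trace_sub_transpose_mul_mul_sub (hSig' ▸ secondMoment_isSymm) hcross, add_sub_cancel_left,
    hsqrt]

/-- The generalisation gap between a linear predictor `f_W` and its equivariant
average `f_{Ψ(W)}`, on a task with an equivariant linear target, `G`-invariant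
covariate law `μ` and centred independent noise, equals `‖Σ^{1/2} W⊥‖_F²`. -/
theorem stmt_11 {G : Type*} [Group G] [TopologicalSpace G] [IsTopologicalGroup G]
    [CompactSpace G] [SecondCountableTopology G] [T2Space G]
    [MeasurableSpace G] [BorelSpace G]
    (lam : Measure G) [IsProbabilityMeasure lam]
    (hlam_left : ∀ g : G, Measure.map (fun h => g * h) lam = lam)
    (hlam_inv : Measure.map (fun g : G => g⁻¹) lam = lam)
    {d k : ℕ}
    (φ : G → Matrix (Fin d) (Fin d) ℝ)
    (hφ_meas : ∀ i j, Measurable fun g => φ g i j)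
    (hφ_one : φ 1 = 1)
    (hφ_mul : ∀ g h, φ (g * h) = φ g * φ h)
    (hφ_orth : ∀ g, (φ g)ᵀ * φ g = 1)
    (ψ : G → Matrix (Fin k) (Fin k) ℝ)
    (hψ_meas : ∀ i j, Measurable fun g => ψ g i j)
    (hψ_one : ψ 1 = 1)
    (hψ_mul : ∀ g h, ψ (g * h) = ψ g * ψ h)
    (hψ_orth : ∀ g, (ψ g)ᵀ * ψ g = 1)
    (μ : Measure (Fin d → ℝ)) [IsProbabilityMeasure μ]
    (hμ_inv : ∀ g : G, Measure.map ((φ g).mulVec) μ = μ)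
    (hmom : ∀ i j, Integrable (fun x => x i * x j) μ)
    (Sig : Matrix (Fin d) (Fin d) ℝ)
    (hSig : ∀ i j, Sig i j = ∫ x, x i * x j ∂μ)
    (hSig_pd : Sig.PosDef)
    (Θ : Matrix (Fin d) (Fin k) ℝ)
    (hΘ_equiv : ∀ g x, ((φ g).mulVec x) ᵥ* Θ = (ψ g).mulVec (x ᵥ* Θ))
    {Ω : Type*} [MeasurableSpace Ω] (P : Measure Ω) [IsProbabilityMeasure P]
    (X : Ω → Fin d → ℝ) (ξ : Ω → Fin k → ℝ)
    (hX_meas : Measurable X) (hξ_meas : Measurable ξ)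
    (hX_law : Measure.map X P = μ)
    (h_indep : IndepFun X ξ P)
    (hξ_mean : ∀ j, ∫ ω, ξ ω j ∂P = 0)
    (hξ_L2 : ∀ j, Integrable (fun ω => (ξ ω j) ^ 2) P)
    (W : Matrix (Fin d) (Fin k) ℝ)
    (Wbar : Matrix (Fin d) (Fin k) ℝ)
    (hWbar : ∀ i j, Wbar i j = ∫ g, (φ g * W * ψ g⁻¹) i j ∂lam) :
    (∫ ω, ∑ j, (((X ω ᵥ* Θ) j + ξ ω j) - (X ω ᵥ* W) j) ^ 2 ∂P)
        - (∫ ω, ∑ j, (((X ω ᵥ* Θ) j + ξ ω j) - (X ω ᵥ* Wbar) j) ^ 2 ∂P)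
      = (((W - Wbar)ᵀ * hSig_pd.posSemidef.sqrtOld)
          * (hSig_pd.posSemidef.sqrtOld * (W - Wbar))).trace :=
  stmt_11_general lam hlam_left φ hφ_meas hφ_one hφ_mul hφ_orth ψ hψ_meas hψ_one hψ_mul hψ_orth μ
    hμ_inv hmom Sig hSig hSig_pd Θ hΘ_equiv P X ξ hX_meas hξ_meas hX_law h_indep hξ_mean hξ_L2 W
    Wbar hWbar
end

section
/- Let X be a set, Y ⊆ ℝ^d convex, and F a class of measurable functions f : X → Y. Let ℓ : Y × Y → ℝ₊ be measurable with ℓ(y,y′) ≤ M for all y, y′, and Lipschitz in its first argument: |ℓ(y₁,y′) − ℓ(y₂,y′)| ≤ C_ℓ ‖y₁ − y₂‖_∞ with C_ℓ independent of y₁, y₂, y′. Let S = ((X₁,Y₁),…,(Xₙ,Yₙ)) be n i.i.d. copies of an arbitrary pair (X,Y) with values in X × Y. Then for all ε > 0: P( sup_{f∈F} | E[ℓ(f(X),Y)] − (1/n) Σ_{i=1}^n ℓ(f(X_i),Y_i) | ≥ ε ) ≤ 2 inf_{α∈(0,1)} 𝒩(F, ‖·‖_∞, αε/(2C_ℓ))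 · exp( −(1/8)(1−α)² n ε² M⁻² ), where 𝒩(F, ‖·‖_∞, κ) is the κ-covering number of F in the uniform norm ‖f‖_∞ = sup_x ‖f(x)‖_∞. -/
/-!
Fix `α` and a finite cover `K` of `F` at radius `αε/(2Cℓ)`. Two functions of `F` within that
radius of a common centre have losses differing by at most `αε` at every sample point with
label in `Yset`, so on each ball of the cover it suffices to control two functions: one nearly
maximising and one nearly minimising the true risk over the ball. Hoeffding's inequality for
the `[0, M]`-valued losses of these two functions, at deviation `(1 - α)ε/4`, gives
`2 exp(-(1/8)(1 - α)² n ε² / M²)` per ball, and a union bound over the balls the factor `#K`.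
-/

open MeasureTheory ProbabilityTheory
open scoped ENNReal NNReal

/-- The `κ`-covering number of a set `U` in a space carrying an extended distance
`ed`: the smallest cardinality of a finite set `K` such that every `u ∈ U` is within
`κ` of some element of `K` (and `⊤` if no finite cover exists). -/
noncomputable def coverNum {T : Type*} (ed : T → T → ℝ≥0∞) (U : Set T) (κ : ℝ) : ℝ≥0∞ :=
  ⨅ (K : Finset T) (_ : ∀ u ∈ U, ∃ v ∈ K, ed u v ≤ ENNReal.ofReal κ), (K.card : ℝ≥0∞)

/-- The uniform (sup) extended distance between two functions with values in `ℝ^d`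
equipped with the max-magnitude norm. -/
noncomputable def unifEdist {X : Type*} {d : ℕ} (f g : X → Fin d → ℝ) : ℝ≥0∞ :=
  ⨆ x, (‖f x - g x‖₊ : ℝ≥0∞)

open Real

noncomputable def empiricalMean {S : Type*} {n : ℕ} (L : S → ℝ) (z : Fin n → S) : ℝ :=
  (n : ℝ)⁻¹ * ∑ i, L (z i)

theorem abs_empiricalMean_sub_le {S : Type*} {n : ℕ} {L L' : S → ℝ} {z : Fin n → S} {β : ℝ}
    (hβ : 0 ≤ β) (h : ∀ i, |L (z i) - L' (z i)| ≤ β) :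
    |empiricalMean L z - empiricalMean L' z| ≤ β := by
  rcases Nat.eq_zero_or_pos n with rfl | hn
  · simpa [empiricalMean] using hβ
  rw [empiricalMean, empiricalMean, ← mul_sub, ← Finset.sum_sub_distrib, abs_mul, abs_inv,
    Nat.abs_cast, inv_mul_le_iff₀ (Nat.cast_pos.2 hn)]
  calc |∑ i, (L (z i) - L' (z i))| ≤ ∑ i, |L (z i) - L' (z i)| := Finset.abs_sum_le_sum_abs ..
    _ ≤ ∑ _i : Fin n, β := Finset.sum_le_sum fun i _ ↦ h i
    _ = n * β := by simp

theorem exists_mem_forall_le_add {ι : Type*} {G : Set ι} (hG : G.Nonempty) {φ : ι → ℝ}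
    (hφ : BddAbove (φ '' G)) {δ : ℝ} (hδ : 0 < δ) : ∃ i ∈ G, ∀ j ∈ G, φ j ≤ φ i + δ := by
  obtain ⟨_, ⟨i, hi, rfl⟩, hlt⟩ := exists_lt_of_lt_csSup (hG.image φ) (sub_lt_self _ hδ)
  exact ⟨i, hi, fun j hj ↦ by linarith [le_csSup hφ (Set.mem_image_of_mem φ hj)]⟩

theorem exists_mem_lt_of_lt_biSup {ι : Type*} {F : Set ι} {φ : ι → ℝ} {c : ℝ} (hc : 0 ≤ c)
    (h : c < ⨆ f ∈ F, φ f) : ∃ f ∈ F, c < φ f := by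
  rcases isEmpty_or_nonempty ι with hι | hι
  · rw [Real.iSup_of_isEmpty] at h
    linarith
  obtain ⟨f, hf⟩ := exists_lt_of_lt_ciSup h
  by_cases hfF : f ∈ F
  · exact ⟨f, hfF, by rwa [ciSup_pos hfF] at hf⟩
  · rw [ciSup_neg hfF, Real.sSup_empty] at hf
    linarith

section IIDSample

variable {S Ω : Type*} [MeasurableSpace S] [MeasurableSpace Ω] {n : ℕ}
  {P : Measure Ω} [IsProbabilityMeasure P] {η : Measure S} {Z : Fin n → Ω → S}

theorem measure_empiricalMean_sub_integral_ge_le (hZ_meas : ∀ i, Measurable (Z i))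
    (hZ_iid : iIndepFun Z P) (hZ_law : ∀ i, P.map (Z i) = η) {L : S → ℝ} (hL : Measurable L)
    {a b : ℝ} (hLab : ∀ᵐ p ∂η, L p ∈ Set.Icc a b) {s : ℝ} (hs : 0 ≤ s) :
    P {ω | s ≤ empiricalMean L (fun i ↦ Z i ω) - ∫ p, L p ∂η}
      ≤ ENNReal.ofReal (exp (-2 * n * s ^ 2 / (b - a) ^ 2)) := by
  rcases Nat.eq_zero_or_pos n with rfl | hn
  · simpa using prob_le_one
  have hn' : (0 : ℝ) < n := Nat.cast_pos.2 hn
  have hsubG : ∀ i, HasSubgaussianMGF (fun ω ↦ L (Z i ω) - ∫ p, L p ∂η)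
      ((‖b - a‖₊ / 2) ^ 2) P := by
    intro i
    have h := hasSubgaussianMGF_of_mem_Icc (hL.comp (hZ_meas i)).aemeasurable
      (ae_of_ae_map (hZ_meas i).aemeasurable ((hZ_law i).symm ▸ hLab))
    have hmean : ∫ ω, L (Z i ω) ∂P = ∫ p, L p ∂η := by
      rw [← hZ_law i, integral_map (hZ_meas i).aemeasurable hL.aestronglyMeasurable]
    simpa only [Function.comp_apply, hmean] using h
  have hind : iIndepFun (fun i ω ↦ L (Z i ω) - ∫ p, L p ∂η) P :=
    hZ_iid.comp (fun _ p ↦ L p - ∫ p, L p ∂η) fun _ ↦ hL.sub_const _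
  have hHoeffding := HasSubgaussianMGF.measure_sum_ge_le_of_iIndepFun hind
    (s := Finset.univ) (fun i _ ↦ hsubG i) (mul_nonneg hn'.le hs)
  have hset : {ω | s ≤ empiricalMean L (fun i ↦ Z i ω) - ∫ p, L p ∂η}
      = {ω | n * s ≤ ∑ i, (L (Z i ω) - ∫ p, L p ∂η)} := by
    ext ω
    simp only [Set.mem_ofPred_eq, empiricalMean, Finset.sum_sub_distrib, Finset.sum_const,
      Finset.card_univ, Fintype.card_fin, nsmul_eq_mul, le_sub_iff_add_le, le_inv_mul_iff₀ hn',
      mul_add]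
  have hexp : -(n * s) ^ 2 / (2 * ((∑ _i : Fin n, (‖b - a‖₊ / 2) ^ 2 : ℝ≥0) : ℝ))
      = -2 * n * s ^ 2 / (b - a) ^ 2 := by
    simp only [Finset.sum_const, Finset.card_univ, Fintype.card_fin, nsmul_eq_mul, NNReal.coe_mul,
      NNReal.coe_natCast, NNReal.coe_pow, NNReal.coe_div, coe_nnnorm, Real.norm_eq_abs, div_pow,
      sq_abs, NNReal.coe_ofNat]
    rcases eq_or_ne (b - a) 0 with hab | hab
    · simp [hab]
    · field_simp
  rw [hset, ← ofReal_measureReal]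
  exact ENNReal.ofReal_le_ofReal (hHoeffding.trans_eq (congrArg rexp hexp))

theorem measure_integral_sub_empiricalMean_ge_le (hZ_meas : ∀ i, Measurable (Z i))
    (hZ_iid : iIndepFun Z P) (hZ_law : ∀ i, P.map (Z i) = η) {L : S → ℝ} (hL : Measurable L)
    {a b : ℝ} (hLab : ∀ᵐ p ∂η, L p ∈ Set.Icc a b) {s : ℝ} (hs : 0 ≤ s) :
    P {ω | s ≤ (∫ p, L p ∂η) - empiricalMean L (fun i ↦ Z i ω)}
      ≤ ENNReal.ofReal (exp (-2 * n * s ^ 2 / (b - a) ^ 2)) := by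
  have h := measure_empiricalMean_sub_integral_ge_le hZ_meas hZ_iid hZ_law hL.neg
    (a := -b) (b := -a) (hLab.mono fun p hp ↦ ⟨neg_le_neg hp.2, neg_le_neg hp.1⟩) hs
  convert h using 5 with ω
  · simp only [empiricalMean, Pi.neg_apply, Finset.sum_neg_distrib, mul_neg, integral_neg,
      sub_neg_eq_add]
    ring
  · ring

theorem measure_exists_lt_abs_integral_sub_empiricalMean_le [IsProbabilityMeasure η]
    (hZ_meas : ∀ i, Measurable (Z i)) (hZ_iid : iIndepFun Z P) (hZ_law : ∀ i, P.map (Z i) = η)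
    {ι : Type*} {L : ι → S → ℝ} {G : Set ι} (hL_meas : ∀ f ∈ G, Measurable (L f)) {a b : ℝ}
    (hL_mem : ∀ f ∈ G, ∀ᵐ p ∂η, L f p ∈ Set.Icc a b) {β : ℝ} (hβ : 0 ≤ β)
    (hL_osc : ∀ᵐ p ∂η, ∀ f ∈ G, ∀ f' ∈ G, |L f p - L f' p| ≤ β) {s c : ℝ} (hs : 0 ≤ s)
    (hsc : s + β < c) :
    P {ω | ∃ f ∈ G, c < |(∫ p, L f p ∂η) - empiricalMean (L f) (fun i ↦ Z i ω)|}
      ≤ 2 * ENNReal.ofReal (exp (-2 * n * s ^ 2 / (b - a) ^ 2)) := by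
  rcases G.eq_empty_or_nonempty with rfl | hG
  · simp
  have hmean : ∀ f ∈ G, |∫ p, L f p ∂η| ≤ max |a| |b| := by
    intro f hf
    simpa using norm_integral_le_of_norm_le_const (f := L f)
      ((hL_mem f hf).mono fun p hp ↦ abs_le_max_abs_abs hp.1 hp.2)
  -- Comparing with near-extremisers of the true risk costs the oscillation `β` only once.
  obtain ⟨fu, hfu, hu⟩ := exists_mem_forall_le_add hG (φ := fun f ↦ ∫ p, L f p ∂η)
    ⟨_, by rintro _ ⟨f, hf, rfl⟩; exact (le_abs_self _).trans (hmean f hf)⟩ (sub_pos.2 hsc)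
  obtain ⟨fd, hfd, hd⟩ := exists_mem_forall_le_add hG (φ := fun f ↦ -∫ p, L f p ∂η)
    ⟨_, by rintro _ ⟨f, hf, rfl⟩; exact (neg_le_abs _).trans (hmean f hf)⟩ (sub_pos.2 hsc)
  have hsample : ∀ᵐ ω ∂P, ∀ f ∈ G, ∀ f' ∈ G,
      |empiricalMean (L f) (fun i ↦ Z i ω) - empiricalMean (L f') (fun i ↦ Z i ω)| ≤ β := by
    have h : ∀ᵐ ω ∂P, ∀ i, ∀ f ∈ G, ∀ f' ∈ G, |L f (Z i ω) - L f' (Z i ω)| ≤ β :=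
      ae_all_iff.2 fun i ↦ ae_of_ae_map (hZ_meas i).aemeasurable ((hZ_law i).symm ▸ hL_osc)
    filter_upwards [h] with ω hω f hf f' hf'
    exact abs_empiricalMean_sub_le hβ fun i ↦ hω i f hf f' hf'
  have hsub : {ω | ∃ f ∈ G, c < |(∫ p, L f p ∂η) - empiricalMean (L f) (fun i ↦ Z i ω)|}
      ≤ᵐ[P] ({ω | s ≤ (∫ p, L fu p ∂η) - empiricalMean (L fu) (fun i ↦ Z i ω)}
        ∪ {ω | s ≤ empiricalMean (L fd) (fun i ↦ Z i ω) - ∫ p, L fd p ∂η} : Set Ω) := by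
    filter_upwards [hsample] with ω hω ⟨f, hf, hdev⟩
    have hEu := abs_le.1 (hω f hf fu hfu)
    have hEd := abs_le.1 (hω f hf fd hfd)
    have hRu := hu f hf
    have hRd := hd f hf
    rcases lt_abs.1 hdev with hdev | hdev
    · left
      simp only [Set.mem_ofPred_eq]
      linarith
    · right
      simp only [Set.mem_ofPred_eq]
      linarith
  calc _ ≤ P _ := measure_mono_ae hsub
    _ ≤ _ := measure_union_le _ _
    _ ≤ _ := add_le_add
        (measure_integral_sub_empiricalMean_ge_le hZ_meas hZ_iid hZ_law (hL_meas fu hfu)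
          (hL_mem fu hfu) hs)
        (measure_empiricalMean_sub_integral_ge_le hZ_meas hZ_iid hZ_law (hL_meas fd hfd)
          (hL_mem fd hfd) hs)
    _ = _ := (two_mul _).symm

end IIDSample

theorem le_coverNum_mul {T : Type*} {ed : T → T → ℝ≥0∞} {U : Set T} {κ : ℝ} {a c : ℝ≥0∞}
    (hc₀ : c ≠ 0) (hc : c ≠ ∞)
    (h : ∀ K : Finset T, (∀ u ∈ U, ∃ v ∈ K, ed u v ≤ ENNReal.ofReal κ) → a ≤ K.card * c) :
    a ≤ coverNum ed U κ * c := by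
  simp only [coverNum, ENNReal.iInf_mul_of_ne hc₀ hc]
  exact le_iInf₂ h

theorem norm_sub_le_of_unifEdist_le {X : Type*} {d : ℕ} {f g : X → Fin d → ℝ} {κ : ℝ}
    (hκ : 0 ≤ κ) (h : unifEdist f g ≤ ENNReal.ofReal κ) (x : X) : ‖f x - g x‖ ≤ κ := by
  have hx : (‖f x - g x‖₊ : ℝ≥0∞) ≤ ENNReal.ofReal κ :=
    (le_iSup (fun x ↦ (‖f x - g x‖₊ : ℝ≥0∞)) x).trans h
  rwa [← ENNReal.ofReal_coe_nnreal, coe_nnnorm, ENNReal.ofReal_le_ofReal_iff hκ] at hx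

theorem abs_sub_le_of_unifEdist_le {X : Type*} {d : ℕ} {Yset : Set (Fin d → ℝ)}
    {ℓ : (Fin d → ℝ) → (Fin d → ℝ) → ℝ} {Cℓ : ℝ}
    (hℓ_lip : ∀ y₁ y₂ y', y₁ ∈ Yset → y₂ ∈ Yset → y' ∈ Yset →
      |ℓ y₁ y' - ℓ y₂ y'| ≤ Cℓ * ‖y₁ - y₂‖)
    {β : ℝ} (hβ : 0 ≤ β) {f₁ f₂ g : X → Fin d → ℝ}
    (h₁ : unifEdist f₁ g ≤ ENNReal.ofReal (β / (2 * Cℓ)))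
    (h₂ : unifEdist f₂ g ≤ ENNReal.ofReal (β / (2 * Cℓ)))
    {x : X} {y : Fin d → ℝ} (hx₁ : f₁ x ∈ Yset) (hx₂ : f₂ x ∈ Yset) (hy : y ∈ Yset) :
    |ℓ (f₁ x) y - ℓ (f₂ x) y| ≤ β := by
  have hlip := hℓ_lip _ _ _ hx₁ hx₂ hy
  rcases le_or_gt Cℓ 0 with hC | hC
  · nlinarith [norm_nonneg (f₁ x - f₂ x)]
  have hκ : 0 ≤ β / (2 * Cℓ) := by positivity
  have hdist : ‖f₁ x - f₂ x‖ ≤ 2 * (β / (2 * Cℓ)) :=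
    calc ‖f₁ x - f₂ x‖ ≤ ‖f₁ x - g x‖ + ‖g x - f₂ x‖ := norm_sub_le_norm_sub_add_norm_sub ..
      _ ≤ 2 * (β / (2 * Cℓ)) := by
        rw [norm_sub_rev (g x)]
        linarith [norm_sub_le_of_unifEdist_le hκ h₁ x, norm_sub_le_of_unifEdist_le hκ h₂ x]
  calc |ℓ (f₁ x) y - ℓ (f₂ x) y| ≤ Cℓ * (2 * (β / (2 * Cℓ))) := hlip.trans (by gcongr)
    _ = β := by field_simp

theorem measure_le_card_mul_exp_of_cover {Xs : Type*} [MeasurableSpace Xs] {d : ℕ}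
    {Yset : Set (Fin d → ℝ)} {F : Set (Xs → Fin d → ℝ)}
    (hF_meas : ∀ f ∈ F, Measurable f) (hF_maps : ∀ f ∈ F, ∀ x, f x ∈ Yset)
    {ℓ : (Fin d → ℝ) → (Fin d → ℝ) → ℝ}
    (hℓ_meas : Measurable fun p : (Fin d → ℝ) × (Fin d → ℝ) => ℓ p.1 p.2) {M Cℓ : ℝ}
    (hℓ_nonneg : ∀ y y', y ∈ Yset → y' ∈ Yset → 0 ≤ ℓ y y')
    (hℓ_bdd : ∀ y y', y ∈ Yset → y' ∈ Yset → ℓ y y' ≤ M)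
    (hℓ_lip : ∀ y₁ y₂ y', y₁ ∈ Yset → y₂ ∈ Yset → y' ∈ Yset →
      |ℓ y₁ y' - ℓ y₂ y'| ≤ Cℓ * ‖y₁ - y₂‖)
    {n : ℕ} {Ω : Type*} [MeasurableSpace Ω] {P : Measure Ω} [IsProbabilityMeasure P]
    {η : Measure (Xs × (Fin d → ℝ))} [IsProbabilityMeasure η] (hη_Y : ∀ᵐ p ∂η, p.2 ∈ Yset)
    {Z : Fin n → Ω → Xs × (Fin d → ℝ)} (hZ_meas : ∀ i, Measurable (Z i))
    (hZ_iid : iIndepFun Z P) (hZ_law : ∀ i, Measure.map (Z i) P = η)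
    {ε : ℝ} (hε : 0 < ε) {α : ℝ} (hα : α ∈ Set.Ioo 0 1) {K : Finset (Xs → Fin d → ℝ)}
    (hK : ∀ f ∈ F, ∃ g ∈ K, unifEdist f g ≤ ENNReal.ofReal (α * ε / (2 * Cℓ))) :
    P {ω | ε ≤ ⨆ f ∈ F,
        |(∫ p, ℓ (f p.1) p.2 ∂η) - (n : ℝ)⁻¹ * ∑ i, ℓ (f (Z i ω).1) (Z i ω).2|}
      ≤ K.card * (2 * ENNReal.ofReal (exp (-(1 / 8) * (1 - α) ^ 2 * n * ε ^ 2 / M ^ 2))) := by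
  obtain ⟨hα₀, hα₁⟩ := hα
  set L : (Xs → Fin d → ℝ) → Xs × (Fin d → ℝ) → ℝ := fun f p ↦ ℓ (f p.1) p.2
  set ball : (Xs → Fin d → ℝ) → Set (Xs → Fin d → ℝ) :=
    fun g ↦ {f | f ∈ F ∧ unifEdist f g ≤ ENNReal.ofReal (α * ε / (2 * Cℓ))}
  have hc : 0 ≤ (1 + α) * ε / 2 := by positivity
  have hs : 0 ≤ (1 - α) * ε / 4 := by nlinarith
  have hsc : (1 - α) * ε / 4 + α * ε < (1 + α) * ε / 2 := by nlinarith
  have hunion : {ω | ε ≤ ⨆ f ∈ F,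
        |(∫ p, ℓ (f p.1) p.2 ∂η) - (n : ℝ)⁻¹ * ∑ i, ℓ (f (Z i ω).1) (Z i ω).2|}
      ⊆ ⋃ g ∈ K, {ω | ∃ f ∈ ball g,
        (1 + α) * ε / 2 < |(∫ p, L f p ∂η) - empiricalMean (L f) (fun i ↦ Z i ω)|} := by
    intro ω hω
    obtain ⟨f, hf, hdev⟩ := exists_mem_lt_of_lt_biSup hc (lt_of_lt_of_le (by nlinarith) hω)
    obtain ⟨g, hg, hfg⟩ := hK f hf
    exact Set.mem_biUnion hg ⟨f, ⟨hf, hfg⟩, hdev⟩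
  have hball : ∀ g, P {ω | ∃ f ∈ ball g,
        (1 + α) * ε / 2 < |(∫ p, L f p ∂η) - empiricalMean (L f) (fun i ↦ Z i ω)|}
      ≤ 2 * ENNReal.ofReal (exp (-2 * n * ((1 - α) * ε / 4) ^ 2 / (M - 0) ^ 2)) := by
    intro g
    refine measure_exists_lt_abs_integral_sub_empiricalMean_le hZ_meas hZ_iid hZ_law
      (fun f hf ↦ hℓ_meas.comp (((hF_meas f hf.1).comp measurable_fst).prodMk measurable_snd))
      (fun f hf ↦ ?_) (mul_pos hα₀ hε).le ?_ hs hsc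
    · filter_upwards [hη_Y] with p hp
      exact ⟨hℓ_nonneg _ _ (hF_maps f hf.1 _) hp, hℓ_bdd _ _ (hF_maps f hf.1 _) hp⟩
    · filter_upwards [hη_Y] with p hp f hf f' hf'
      exact abs_sub_le_of_unifEdist_le hℓ_lip (mul_pos hα₀ hε).le hf.2 hf'.2
        (hF_maps f hf.1 _) (hF_maps f' hf'.1 _) hp
  have hexp : -2 * n * ((1 - α) * ε / 4) ^ 2 / (M - 0) ^ 2
      = -(1 / 8) * (1 - α) ^ 2 * n * ε ^ 2 / M ^ 2 := by ring
  calc _ ≤ P (⋃ g ∈ K, _) := measure_mono hunion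
    _ ≤ ∑ g ∈ K, P _ := measure_biUnion_finset_le _ _
    _ ≤ ∑ _g ∈ K, _ := Finset.sum_le_sum fun g _ ↦ hball g
    _ = _ := by rw [Finset.sum_const, nsmul_eq_mul, hexp]

theorem stmt_17_general {Xs : Type*} [MeasurableSpace Xs] {d : ℕ}
    (Yset : Set (Fin d → ℝ))
    (F : Set (Xs → Fin d → ℝ))
    (hF_meas : ∀ f ∈ F, Measurable f)
    (hF_maps : ∀ f ∈ F, ∀ x, f x ∈ Yset)
    (ℓ : (Fin d → ℝ) → (Fin d → ℝ) → ℝ)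
    (hℓ_meas : Measurable fun p : (Fin d → ℝ) × (Fin d → ℝ) => ℓ p.1 p.2)
    (M Cℓ : ℝ)
    (hℓ_nonneg : ∀ y y', y ∈ Yset → y' ∈ Yset → 0 ≤ ℓ y y')
    (hℓ_bdd : ∀ y y', y ∈ Yset → y' ∈ Yset → ℓ y y' ≤ M)
    (hℓ_lip : ∀ y₁ y₂ y', y₁ ∈ Yset → y₂ ∈ Yset → y' ∈ Yset →
      |ℓ y₁ y' - ℓ y₂ y'| ≤ Cℓ * ‖y₁ - y₂‖)
    {n : ℕ} {Ω : Type*} [MeasurableSpace Ω] (P : Measure Ω) [IsProbabilityMeasure P]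
    (η : Measure (Xs × (Fin d → ℝ))) [IsProbabilityMeasure η]
    (hη_Y : ∀ᵐ p ∂η, p.2 ∈ Yset)
    (Z : Fin n → Ω → Xs × (Fin d → ℝ))
    (hZ_meas : ∀ i, Measurable (Z i))
    (hZ_iid : iIndepFun Z P)
    (hZ_law : ∀ i, Measure.map (Z i) P = η)
    (ε : ℝ) (hε : 0 < ε) :
    P {ω | ε ≤ ⨆ f ∈ F,
        |(∫ p, ℓ (f p.1) p.2 ∂η)
          - (n : ℝ)⁻¹ * ∑ i, ℓ (f (Z i ω).1) (Z i ω).2|}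
      ≤ 2 * ⨅ α ∈ Set.Ioo (0 : ℝ) 1,
          coverNum unifEdist F (α * ε / (2 * Cℓ))
            * ENNReal.ofReal
                (Real.exp (-(1 / 8) * (1 - α) ^ 2 * n * ε ^ 2 / M ^ 2)) := by
  simp only [ENNReal.mul_iInf_of_ne two_ne_zero ENNReal.ofNat_ne_top]
  refine le_iInf₂ fun α hα ↦ ?_
  rw [mul_left_comm]
  exact le_coverNum_mul (by positivity) (by finiteness) fun K hK ↦
    measure_le_card_mul_exp_of_cover hF_meas hF_maps hℓ_meas hℓ_nonneg hℓ_bdd hℓ_lip hη_Y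
      hZ_meas hZ_iid hZ_law hε hα hK

/-- Uniform concentration over a function class `F` via covering numbers in the
uniform norm, for a bounded loss that is Lipschitz in its first argument. -/
theorem stmt_17 {Xs : Type*} [MeasurableSpace Xs] {d : ℕ}
    (Yset : Set (Fin d → ℝ)) (hY_conv : Convex ℝ Yset)
    (F : Set (Xs → Fin d → ℝ))
    (hF_meas : ∀ f ∈ F, Measurable f)
    (hF_maps : ∀ f ∈ F, ∀ x, f x ∈ Yset)
    (ℓ : (Fin d → ℝ) → (Fin d → ℝ) → ℝ)
    (hℓ_meas : Measurable fun p : (Fin d → ℝ) × (Fin d → ℝ) => ℓ p.1 p.2)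
    (M Cℓ : ℝ)
    (hℓ_nonneg : ∀ y y', y ∈ Yset → y' ∈ Yset → 0 ≤ ℓ y y')
    (hℓ_bdd : ∀ y y', y ∈ Yset → y' ∈ Yset → ℓ y y' ≤ M)
    (hℓ_lip : ∀ y₁ y₂ y', y₁ ∈ Yset → y₂ ∈ Yset → y' ∈ Yset →
      |ℓ y₁ y' - ℓ y₂ y'| ≤ Cℓ * ‖y₁ - y₂‖)
    {n : ℕ} {Ω : Type*} [MeasurableSpace Ω] (P : Measure Ω) [IsProbabilityMeasure P]
    (η : Measure (Xs × (Fin d → ℝ))) [IsProbabilityMeasure η]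
    (hη_Y : ∀ᵐ p ∂η, p.2 ∈ Yset)
    (Z : Fin n → Ω → Xs × (Fin d → ℝ))
    (hZ_meas : ∀ i, Measurable (Z i))
    (hZ_iid : iIndepFun Z P)
    (hZ_law : ∀ i, Measure.map (Z i) P = η)
    (ε : ℝ) (hε : 0 < ε) :
    P {ω | ε ≤ ⨆ f ∈ F,
        |(∫ p, ℓ (f p.1) p.2 ∂η)
          - (n : ℝ)⁻¹ * ∑ i, ℓ (f (Z i ω).1) (Z i ω).2|}
      ≤ 2 * ⨅ α ∈ Set.Ioo (0 : ℝ) 1,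
          coverNum unifEdist F (α * ε / (2 * Cℓ))
            * ENNReal.ofReal
                (Real.exp (-(1 / 8) * (1 - α) ^ 2 * n * ε ^ 2 / M ^ 2)) :=
  stmt_17_general Yset F hF_meas hF_maps ℓ hℓ_meas M Cℓ hℓ_nonneg hℓ_bdd hℓ_lip P η hη_Y Z hZ_meas
    hZ_iid hZ_law ε hε
end
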